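/- arXiv:0802.2864 — 4 statements merged into one kernel-verified Lean document; each statement's English description precedes it below -/
import Mathlib

section
/- For any integer k ≥ 14 and any angle Θ with 0 < Θ ≤ 2π/k, we have Θ / cos(Θ/2) ≤ 2π/(k·cos(π/k)). -/
open Real

theorem stmt0 (k : ℤ) (hk : 14 ≤ k) (Θ : ℝ) (hΘ0 : 0 < Θ) (hΘk : Θ ≤ 2 * π / k) :
    Θ / Real.cos (Θ / 2) ≤ 2 * π / (k * Real.cos (π / k)) := by
  have hk14 : (14 : ℝ) ≤ (k : ℝ) := by exact_mod_cast hk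
  have hkpos : (0 : ℝ) < k := by linarith
  have hpi : 0 < π := Real.pi_pos
  have hhalf : Θ / 2 ≤ π / k := by
    rw [div_le_div_iff₀ two_pos hkpos]
    have := (le_div_iff₀ hkpos).mp hΘk
    linarith
  have hk2 : π / k < π / 2 := by
    apply div_lt_div_of_pos_left hpi two_pos
    linarith
  have hdp : 0 < π / k := div_pos hpi hkpos
  have hcospos : 0 < Real.cos (π / k) :=
    Real.cos_pos_of_mem_Ioo ⟨by linarith, hk2⟩
  have hcosle : Real.cos (π / k) ≤ Real.cos (Θ / 2) := by
    apply Real.cos_le_cos_of_nonneg_of_le_pi (by positivity) (by linarith [Real.pi_pos]) hhalf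
  have h2pik : 0 ≤ 2 * π / k := by positivity
  rw [← div_div]
  exact div_le_div₀ h2pik hΘk hcospos hcosle
end

section
/- Let C be a point and N₀, N₁, …, N_s points with |CN₀| ≤ |CN₁| ≤ … ≤ |CN_s|, and suppose all angles ∠N_iCN_{i+1} are nonnegative and sum to Θ ≤ 2π/k for integer k ≥ 14. For each i, let N'_i be the point on ray CN_i with |CN'_i| = |CN_{i+1}|. Then |CN₀| + Σ_{i=0}^{s−1} (|N_iN'_i| + |CN_{i+1}|·∠N_iCN_{i+1}) ≤ (1 + 2π/(k·cos(π/k)))·|CN_s|. -/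
open Real EuclideanGeometry Finset

theorem stmt7 (k : ℤ) (hk : 14 ≤ k) (s : ℕ)
    (C : EuclideanSpace ℝ (Fin 2)) (N : Fin (s + 1) → EuclideanSpace ℝ (Fin 2))
    (N' : Fin s → EuclideanSpace ℝ (Fin 2))
    (hmono : ∀ i : Fin s, dist C (N i.castSucc) ≤ dist C (N i.succ))
    (hray : ∀ i : Fin s, SameRay ℝ (N i.castSucc - C) (N' i - C))
    (hN' : ∀ i : Fin s, dist C (N' i) = dist C (N i.succ))
    (Θ : ℝ) (hΘ : ∑ i : Fin s, ∠ (N i.castSucc) C (N i.succ) = Θ)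
    (hΘk : Θ ≤ 2 * π / k) :
    dist C (N 0) +
      ∑ i : Fin s,
        (dist (N i.castSucc) (N' i) + dist C (N i.succ) * ∠ (N i.castSucc) C (N i.succ)) ≤
    (1 + 2 * π / (k * Real.cos (π / k))) * dist C (N (Fin.last s)) := by
  have hkpos : (0:ℝ) < (k:ℝ) := by exact_mod_cast lt_of_lt_of_le (by norm_num) hk
  -- dist N_i N'_i = d_{i+1} - d_i
  have hd : ∀ i : Fin s, dist (N i.castSucc) (N' i)
      = dist C (N i.succ) - dist C (N i.castSucc) := by
    intro i
    have h1 : dist (N i.castSucc) (N' i) = ‖(N i.castSucc - C) - (N' i - C)‖ := by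
      rw [dist_eq_norm]; abel_nf
    have h2 : ‖N i.castSucc - C‖ = dist C (N i.castSucc) := by
      rw [← dist_eq_norm, dist_comm]
    have h3 : ‖N' i - C‖ = dist C (N i.succ) := by
      rw [← dist_eq_norm, dist_comm, hN' i]
    rw [h1, (hray i).norm_sub, h2, h3, abs_of_nonpos (by linarith [hmono i]), neg_sub]
  -- f n = dist C (N (min n s))
  set f : ℕ → ℝ := fun n => dist C (N ⟨min n s, by omega⟩) with hf
  have hcast : ∀ i : Fin s, dist C (N i.castSucc) = f i.val := by
    intro i
    have h : (⟨min i.val s, by omega⟩ : Fin (s+1)) = i.castSucc := by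
      apply Fin.ext; simp [Nat.min_eq_left i.isLt.le]
    simp only [hf, h]
  have hsucc : ∀ i : Fin s, dist C (N i.succ) = f (i.val + 1) := by
    intro i
    have h : (⟨min (i.val + 1) s, by omega⟩ : Fin (s+1)) = i.succ := by
      apply Fin.ext; simp [Nat.min_eq_left i.isLt]
    simp only [hf, h]
  have hf0 : dist C (N 0) = f 0 := by
    have h : (⟨min 0 s, by omega⟩ : Fin (s+1)) = 0 := by
      apply Fin.ext; simp
    simp only [hf, h]
  have hfs : dist C (N (Fin.last s)) = f s := by
    have h : (⟨min s s, by omega⟩ : Fin (s+1)) = Fin.last s := by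
      apply Fin.ext; simp
    simp only [hf, h]
  have hmono' : Monotone f := by
    apply monotone_nat_of_le_succ
    intro n
    by_cases hn : n < s
    · have := hmono ⟨n, hn⟩
      rw [hcast ⟨n, hn⟩, hsucc ⟨n, hn⟩] at this
      exact this
    · have : min n s = min (n+1) s := by omega
      simp only [hf, this]; exact le_refl _
  have hfle : ∀ i : Fin s, f (i.val + 1) ≤ f s := fun i => hmono' i.isLt
  have hfnn : 0 ≤ f s := dist_nonneg
  -- split the sum
  have hsplit : ∑ i : Fin s,
      (dist (N i.castSucc) (N' i) + dist C (N i.succ) * ∠ (N i.castSucc) C (N i.succ))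
      = (f s - f 0) + ∑ i : Fin s, f (i.val + 1) * ∠ (N i.castSucc) C (N i.succ) := by
    rw [Finset.sum_add_distrib]
    congr 1
    · have : ∀ i : Fin s, dist (N i.castSucc) (N' i) = f (i.val + 1) - f i.val := by
        intro i; rw [hd i, hcast i, hsucc i]
      rw [Finset.sum_congr rfl (fun i _ => this i), Fin.sum_univ_eq_sum_range
        (fun j => f (j + 1) - f j), Finset.sum_range_sub]
    · exact Finset.sum_congr rfl (fun i _ => by rw [hsucc i])
  -- angle sum bound
  have hangnn : ∀ i : Fin s, 0 ≤ ∠ (N i.castSucc) C (N i.succ) :=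
    fun i => EuclideanGeometry.angle_nonneg _ _ _
  have hsum2 : ∑ i : Fin s, f (i.val + 1) * ∠ (N i.castSucc) C (N i.succ) ≤ f s * Θ := by
    rw [← hΘ, Finset.mul_sum]
    exact Finset.sum_le_sum (fun i _ =>
      mul_le_mul_of_nonneg_right (hfle i) (hangnn i))
  -- constant comparison
  have hcos1 : Real.cos (π / k) ≤ 1 := Real.cos_le_one _
  have hcospos : 0 < Real.cos (π / k) := by
    apply Real.cos_pos_of_mem_Ioo
    constructor
    · have : 0 < π / (k:ℝ) := div_pos Real.pi_pos hkpos
      linarith [Real.pi_pos]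
    · rw [div_lt_iff₀ hkpos]
      nlinarith [Real.pi_pos, hkpos, (by exact_mod_cast hk : (14:ℝ) ≤ (k:ℝ))]
  have hconst : 2 * π / (k:ℝ) ≤ 2 * π / ((k:ℝ) * Real.cos (π / k)) := by
    apply div_le_div_of_nonneg_left (by positivity) (by positivity)
    nlinarith
  have hΘnn : 0 ≤ Θ := by
    rw [← hΘ]; exact Finset.sum_nonneg (fun i _ => hangnn i)
  have hfinal : f s * Θ ≤ 2 * π / ((k:ℝ) * Real.cos (π / k)) * f s := by
    rw [mul_comm]
    exact mul_le_mul_of_nonneg_right (le_trans hΘk hconst) hfnn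
  rw [hf0, hfs, hsplit]
  nlinarith [hsum2, hfinal, hfnn]
end

section
/- Let C, A, B be points with ∠ACB ≤ 2π/k (k ≥ 14 an integer), and let S be the set consisting of A, B, and all points of a given finite point set P lying in the interior of triangle ABC, where |CA| ≤ |CX| for every X ∈ S. If N₀ = A, N₁, …, N_s = B are the vertices of the convex hull of S listed in angular order around C, then |CN_i| ≤ |CN_{i+1}| for all 0 ≤ i ≤ s−1. -/
/-!
Let `p = N i` and `q = N (i+1)` and suppose `|Cp| > |Cq|`. Since `∠ACp ≤ ∠ACq`, the point `p` lies
in the part of triangle `ABC` cut off by the ray `Cq` on the side of `A`, and that part is the union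
of the triangles `ACq` and `AqB`. By convexity of the distance to `C`, every point of `ACq` is
within `max |CA| |Cq| = |Cq|` of `C`, so `p ∈ AqB ⊆ conv S`, contradicting that `p` is a vertex of
`conv S` other than `A`, `q`, `B`. Nondegeneracy of `ABC` (some point of `P` lies in its interior)
is what makes "`p` on the `B`-side of `Cq`" force the strict inequality `∠ACq < ∠ACp`.
-/

section ConvexHullTriple

variable {E : Type*} [AddCommGroup E] [Module ℝ E]

theorem mem_convexHull_triple_iff {X Y Z x : E} :
    x ∈ convexHull ℝ {X, Y, Z} ↔
      ∃ s t : ℝ, 0 ≤ s ∧ 0 ≤ t ∧ s + t ≤ 1 ∧ x = Z + s • (X - Z) + t • (Y - Z) := by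
  constructor
  · rw [convexHull_insert (Set.insert_nonempty Y {Z}), mem_convexJoin, convexHull_pair]
    rintro ⟨X, rfl, y, ⟨f, g, hf, hg, hfg, rfl⟩, c, e, hc, he, hce, rfl⟩
    refine ⟨c, e * f, hc, mul_nonneg he hf, by nlinarith, ?_⟩
    obtain rfl : e = 1 - c := by linarith
    obtain rfl : g = 1 - f := by linarith
    module
  · rintro ⟨s, t, hs, ht, hst, rfl⟩
    have := (convex_convexHull ℝ ({X, Y, Z} : Set E)).sum_mem (t := Finset.univ)
      (w := ![s, t, 1 - s - t]) (z := ![X, Y, Z])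
      (fun i _ => by fin_cases i <;> simp <;> linarith)
      (by simp [Fin.sum_univ_three])
      (fun i _ => subset_convexHull ℝ _ (by fin_cases i <;> simp))
    convert this using 1
    simp [Fin.sum_univ_three]
    module

/-- In the coordinates `A - C`, `B - C`, the condition `b a' ≤ a b'` says that `p` lies on the
`A`-side of the ray `Cq`. -/
theorem mem_convexHull_or_mem_convexHull_of_mul_le_mul {A B C p q : E} {a b a' b' : ℝ}
    (ha : 0 ≤ a) (hb : 0 ≤ b) (hab : a + b ≤ 1) (ha' : 0 ≤ a') (hb' : 0 ≤ b')
    (hq0 : 0 < a' + b') (hp : p = C + a • (A - C) + b • (B - C))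
    (hq : q = C + a' • (A - C) + b' • (B - C)) (hcross : b * a' ≤ a * b') :
    p ∈ convexHull ℝ {A, q, C} ∨ p ∈ convexHull ℝ {A, q, B} := by
  simp only [mem_convexHull_triple_iff]
  subst hp hq
  rcases hb'.eq_or_lt with rfl | hb'
  · obtain rfl : b = 0 := by nlinarith
    exact Or.inl ⟨a, 0, ha, le_rfl, by linarith, by module⟩
  -- `p = C + μ (A - C) + λ (q - C)` with `λ = b / b'`, and `excess = b' (λ + μ - 1)` tells on
  -- which side of the line `Aq` the point `p` lies
  set excess := b * (1 - a') + a * b' - b'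
  rcases le_or_gt excess 0 with hle | hlt
  · refine Or.inl ⟨a - b / b' * a', b / b', ?_, by positivity, ?_, ?_⟩
    · rw [sub_nonneg, div_mul_eq_mul_div, div_le_iff₀ hb']
      linarith
    · have key : a - b / b' * a' + b / b' = 1 + excess / b' := by
        field_simp
        ring
      linarith [div_nonpos_of_nonpos_of_nonneg hle hb'.le]
    · match_scalars <;> field_simp <;> ring
  · have hden : 0 < 1 - a' - b' := by nlinarith
    obtain ⟨β, hβ0, hβ⟩ : ∃ β, 0 ≤ β ∧ β * (1 - a' - b') = 1 - a - b :=
      ⟨(1 - a - b) / (1 - a' - b'), div_nonneg (by linarith) hden.le, by field_simp⟩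
    refine Or.inr ⟨a - β * a', β, ?_, hβ0, ?_, ?_⟩
    · have key : (b' * (1 - a' - b')) * (a - β * a')
          = a' * excess + (1 - a' - b') * (a * b' - b * a') := by
        linear_combination (-(a' * b')) * hβ
      refine (mul_nonneg_iff_of_pos_left (mul_pos hb' hden)).mp ?_
      rw [key]
      have := mul_nonneg hden.le (sub_nonneg.2 hcross)
      positivity
    · have key : (1 - a' - b') * (1 - (a - β * a' + β)) = excess := by
        linear_combination (-(1 - a')) * hβ
      have := (mul_nonneg_iff_of_pos_left hden).mp (key ▸ hlt.le)
      linarith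
    · match_scalars <;> linarith

end ConvexHullTriple

theorem linearIndependent_sub_of_mem_interior_convexHull {V : Type*} [NormedAddCommGroup V]
    [NormedSpace ℝ V] [FiniteDimensional ℝ V] (hV : Module.finrank ℝ V = 2) {A B C x : V}
    (hx : x ∈ interior (convexHull ℝ {A, B, C})) : LinearIndependent ℝ ![A - C, B - C] := by
  have hspan : Submodule.span ℝ (Set.range ![A - C, B - C]) = ⊤ := by
    have h := interior_convexHull_nonempty_iff_affineSpan_eq_top.mp ⟨x, hx⟩
    rw [← AffineSubspace.direction_top ℝ V V, ← h, direction_affineSpan,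
      vectorSpan_eq_span_vsub_set_right ℝ (by simp : C ∈ ({A, B, C} : Set V))]
    simp only [Set.image_insert_eq, Set.image_singleton, vsub_eq_sub, sub_self, Matrix.range_cons,
      Matrix.range_empty, Set.union_empty, Set.union_singleton, Set.pair_comm (B - C) 0,
      Set.insert_comm _ (0 : V), Submodule.span_insert_zero]
    rw [Set.pair_comm]
  rw [linearIndependent_iff_card_eq_finrank_span, Set.finrank, hspan, finrank_top, hV,
    Fintype.card_fin]

namespace InnerProductGeometry

variable {V : Type*} [NormedAddCommGroup V] [InnerProductSpace ℝ V]

/-- `w = a' u + b' v` lies in the cone spanned by `u` and `r = a u + b v`, so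
`angle u r = angle u w + angle w r`, and `angle w r ≠ 0` by independence of `u, v`. -/
theorem angle_lt_angle_of_mul_lt_mul {u v : V} {a b a' b' : ℝ}
    (huv : LinearIndependent ℝ ![u, v]) (ha : 0 ≤ a) (ha' : 0 ≤ a') (hb' : 0 ≤ b')
    (hcross : a * b' < b * a') :
    angle u (a' • u + b' • v) < angle u (a • u + b • v) := by
  set w := a' • u + b' • v
  set r := a • u + b • v
  have hb : 0 < b := by
    by_contra! hb
    nlinarith [mul_nonneg ha hb', mul_nonpos_of_nonpos_of_nonneg hb ha']
  have hw : w ≠ 0 := fun hw => by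
    have := LinearIndependent.pair_iff.mp huv a' b' hw
    nlinarith
  have hmem : w ∈ Submodule.span NNReal {u, r} := by
    rw [Submodule.mem_span_pair]
    refine ⟨((a' * b - a * b') / b).toNNReal, (b' / b).toNNReal, ?_⟩
    rw [NNReal.smul_def, NNReal.smul_def, Real.coe_toNNReal _ (div_nonneg (by linarith) hb.le),
      Real.coe_toNNReal _ (by positivity)]
    match_scalars
    · field_simp
      ring
    · field_simp
  rw [angle_eq_angle_add_add_angle_add_of_mem_span hw hmem, lt_add_iff_pos_right]
  refine (angle_nonneg w r).lt_of_ne' fun h => ?_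
  obtain ⟨-, c, -, hc⟩ := angle_eq_zero_iff.mp h
  have := LinearIndependent.pair_iff.mp huv (a - c * a') (b - c * b') <| by
    rw [← sub_eq_zero.2 (hc : r = c • w)]
    module
  nlinarith

end InnerProductGeometry

open Real EuclideanGeometry

theorem mem_convexHull_of_angle_le_of_dist_lt {V : Type*} [NormedAddCommGroup V]
    [InnerProductSpace ℝ V] {A B C p q : V} (hABC : LinearIndependent ℝ ![A - C, B - C])
    (hp : p ∈ convexHull ℝ {A, B, C}) (hq : q ∈ convexHull ℝ {A, B, C})
    (hAq : dist C A ≤ dist C q) (hqp : dist C q < dist C p) (hangle : ∠ A C p ≤ ∠ A C q) :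
    p ∈ convexHull ℝ {A, q, B} := by
  obtain ⟨a, b, ha, hb, hab, rfl⟩ := mem_convexHull_triple_iff.mp hp
  obtain ⟨a', b', ha', hb', -, rfl⟩ := mem_convexHull_triple_iff.mp hq
  have hq0 : 0 < a' + b' := by
    by_contra! h
    obtain ⟨rfl, rfl⟩ : a' = 0 ∧ b' = 0 := ⟨by linarith, by linarith⟩
    simp only [zero_smul, add_zero, dist_self] at hAq
    exact hABC.ne_zero 0 (sub_eq_zero.2 (dist_le_zero.1 hAq).symm)
  rcases lt_or_ge (a * b') (b * a') with hlt | hle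
  · have := InnerProductGeometry.angle_lt_angle_of_mul_lt_mul hABC ha ha' hb' hlt
    simp only [EuclideanGeometry.angle, vsub_eq_sub, add_assoc, add_sub_cancel_left] at hangle
    linarith
  rcases mem_convexHull_or_mem_convexHull_of_mul_le_mul (A := A) (B := B) (C := C)
    ha hb hab ha' hb' hq0 rfl rfl hle with h | h
  · have hball : convexHull ℝ {A, C + a' • (A - C) + b' • (B - C), C} ⊆
        Metric.closedBall C (dist C (C + a' • (A - C) + b' • (B - C))) := by
      refine convexHull_min ?_ (convex_closedBall _ _)
      simpa [Set.insert_subset_iff, dist_comm] using hAq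
    have := hball h
    rw [Metric.mem_closedBall, dist_comm] at this
    linarith
  · exact h

theorem stmt8_general (P : Finset (EuclideanSpace ℝ (Fin 2)))
    (C A B : EuclideanSpace ℝ (Fin 2))
    (S : Set (EuclideanSpace ℝ (Fin 2)))
    (hS : S = {A, B} ∪ {X | X ∈ P ∧
      X ∈ interior (convexHull ℝ ({A, B, C} : Set (EuclideanSpace ℝ (Fin 2))))})
    (hshort : ∀ X ∈ S, dist C A ≤ dist C X)
    (s : ℕ) (N : Fin (s + 1) → EuclideanSpace ℝ (Fin 2))
    (hNs : N (Fin.last s) = B) (hinj : Function.Injective N)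
    (hvert : Set.range N = Set.extremePoints ℝ (convexHull ℝ S))
    (horder : ∀ i j : Fin (s + 1), i ≤ j → ∠ A C (N i) ≤ ∠ A C (N j)) :
    ∀ i : Fin s, dist C (N i.castSucc) ≤ dist C (N i.succ) := by
  intro i
  have hNS (j : Fin (s + 1)) : N j ∈ S :=
    extremePoints_convexHull_subset (hvert ▸ Set.mem_range_self j)
  have hpB : N i.castSucc ≠ B := hNs ▸ hinj.ne (Fin.castSucc_lt_last i).ne
  by_cases hpA : N i.castSucc = A
  · exact hpA ▸ hshort _ (hNS _)
  have hpI : N i.castSucc ∈ interior (convexHull ℝ {A, B, C}) := by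
    rcases hS ▸ hNS i.castSucc with h | h
    · exact absurd h (by simp [hpA, hpB])
    · exact h.2
  have hqT : N i.succ ∈ convexHull ℝ {A, B, C} := by
    rcases hS ▸ hNS i.succ with h | h
    · exact subset_convexHull ℝ _
        (Set.insert_subset_insert (Set.singleton_subset_iff.2 (Set.mem_insert _ _)) h)
    · exact interior_subset h.2
  by_contra! hlt
  have hmem := mem_convexHull_of_angle_le_of_dist_lt
    (linearIndependent_sub_of_mem_interior_convexHull finrank_euclideanSpace_fin hpI)
    (interior_subset hpI) hqT (hshort _ (hNS _)) hlt (horder _ _ Fin.castSucc_lt_succ.le)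
  have hsub : convexHull ℝ {A, N i.succ, B} ⊆ convexHull ℝ S :=
    convexHull_mono <| Set.insert_subset (by simp [hS]) (Set.pair_subset (hNS _) (by simp [hS]))
  obtain h | h | h := extremePoints_convexHull_subset
    (inter_extremePoints_subset_extremePoints_of_subset hsub ⟨hmem, hvert ▸ Set.mem_range_self _⟩)
  · exact hpA h
  · exact Fin.castSucc_lt_succ.ne (hinj h)
  · exact hpB h

theorem stmt8 (k : ℤ) (hk : 14 ≤ k) (P : Finset (EuclideanSpace ℝ (Fin 2)))
    (C A B : EuclideanSpace ℝ (Fin 2)) (hang : ∠ A C B ≤ 2 * π / k)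
    (S : Set (EuclideanSpace ℝ (Fin 2)))
    (hS : S = {A, B} ∪ {X | X ∈ P ∧
      X ∈ interior (convexHull ℝ ({A, B, C} : Set (EuclideanSpace ℝ (Fin 2))))})
    (hshort : ∀ X ∈ S, dist C A ≤ dist C X)
    (s : ℕ) (N : Fin (s + 1) → EuclideanSpace ℝ (Fin 2))
    (hN0 : N 0 = A) (hNs : N (Fin.last s) = B) (hinj : Function.Injective N)
    (hvert : Set.range N = Set.extremePoints ℝ (convexHull ℝ S))
    (horder : ∀ i j : Fin (s + 1), i ≤ j → ∠ A C (N i) ≤ ∠ A C (N j)) :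
    ∀ i : Fin s, dist C (N i.castSucc) ≤ dist C (N i.succ) :=
  stmt8_general P C A B S hS hshort s N hNs hinj hvert horder
end

section
/- Let P be a finite set of points in general position in the plane and let G be its Delaunay graph. If CA and CB are edges of G with circumcircle (O) = circumcircle of triangle ABC, then the region of (O) cut off by chord CA on the side away from B contains no point of P in its interior, and similarly the region of (O) cut off by chord CB on the side away from A contains no point of P in its interior. -/
open Real EuclideanGeometry RealInnerProductSpace

/-- `XY` is an edge of the Delaunay graph of `P`: there is a circle through `X` and `Y`
whose interior contains no point of `P`. -/
def DelaunayEdge (P : Finset (EuclideanSpace ℝ (Fin 2))) (X Y : EuclideanSpace ℝ (Fin 2)) :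
    Prop :=
  X ∈ P ∧ Y ∈ P ∧ X ≠ Y ∧
    ∃ (o : EuclideanSpace ℝ (Fin 2)) (r : ℝ), 0 < r ∧ dist o X = r ∧ dist o Y = r ∧
      ∀ Z ∈ P, r ≤ dist o Z

/-- `P` is in general position: no four points of `P` are cocircular. -/
def GeneralPosition (P : Finset (EuclideanSpace ℝ (Fin 2))) : Prop :=
  ∀ (o : EuclideanSpace ℝ (Fin 2)) (r : ℝ),
    Set.ncard {X ∈ (P : Set (EuclideanSpace ℝ (Fin 2))) | dist o X = r} ≤ 3

private lemma sameRay_real_mul_nonneg {a b : ℝ} (h : SameRay ℝ a b) : 0 ≤ a * b := by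
  rcases h with h | h | ⟨r₁, r₂, hr₁, hr₂, hab⟩
  · simp [h]
  · simp [h]
  · simp only [smul_eq_mul] at hab
    have h2 : r₁ * a * b = r₂ * b * b := by rw [hab]
    nlinarith [sq_nonneg b]

private noncomputable def Lmap (v : EuclideanSpace ℝ (Fin 2)) : EuclideanSpace ℝ (Fin 2) →ₗ[ℝ] ℝ where
  toFun X := 2 * ⟪X, v⟫
  map_add' x y := by simp only [inner_add_left]; ring
  map_smul' c x := by simp only [real_inner_smul_left, RingHom.id_apply, smul_eq_mul]; ring

private lemma Lmap_apply (v X : EuclideanSpace ℝ (Fin 2)) : Lmap v X = 2 * ⟪X, v⟫ := rfl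

private lemma aux_side (P : Finset (EuclideanSpace ℝ (Fin 2)))
    (C A B o : EuclideanSpace ℝ (Fin 2)) (r : ℝ)
    (hCA : DelaunayEdge P C A) (hBP : B ∈ P)
    (hoA : dist o A = r) (hoB : dist o B = r) (hoC : dist o C = r) :
    ∀ Z ∈ P, ¬ (dist o Z < r ∧
      (affineSpan ℝ ({C, A} : Set (EuclideanSpace ℝ (Fin 2)))).SOppSide Z B) := by
  obtain ⟨hCP, hAP, hCAne, o', r', hr', ho'C, ho'A, hall⟩ := hCA
  rintro Z hZP ⟨hZlt, hside⟩
  set v : EuclideanSpace ℝ (Fin 2) := o - o' with hv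
  -- the "power difference" function
  set h : EuclideanSpace ℝ (Fin 2) → ℝ :=
    fun X => 2 * ⟪X, v⟫ + (‖o'‖ ^ 2 - ‖o‖ ^ 2 + r ^ 2 - r' ^ 2) with hh
  have hkey : ∀ X, h X = (dist o' X ^ 2 - r' ^ 2) - (dist o X ^ 2 - r ^ 2) := by
    intro X
    simp only [hh, hv, dist_eq_norm, inner_sub_right]
    rw [norm_sub_sq_real, norm_sub_sq_real]
    simp [real_inner_comm]
    ring
  have hC0 : h C = 0 := by rw [hkey, ho'C, hoC]; ring
  have hA0 : h A = 0 := by rw [hkey, ho'A, hoA]; ring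
  have hdiff : ∀ X Y : EuclideanSpace ℝ (Fin 2), 2 * ⟪X - Y, v⟫ = h X - h Y := by
    intro X Y; simp only [hh, inner_sub_left]; ring
  -- h vanishes on the line through C and A
  have hline : ∀ p ∈ affineSpan ℝ ({C, A} : Set (EuclideanSpace ℝ (Fin 2))), h p = 0 := by
    intro p hp
    have hp' : (p - C) +ᵥ C ∈ line[ℝ, C, A] := by
      simpa [vadd_eq_add, sub_add_cancel] using hp
    obtain ⟨t, ht⟩ := vadd_left_mem_affineSpan_pair.mp hp'
    have : 2 * ⟪p - C, v⟫ = t * (2 * ⟪A - C, v⟫) := by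
      rw [show p - C = t • (A - C) by rw [← ht]; simp [vsub_eq_sub]]
      rw [real_inner_smul_left]; ring
    rw [hdiff, hdiff, hC0, hA0] at this
    linarith
  -- h Z > 0
  have hZpos : 0 < h Z := by
    rw [hkey]
    have h1 : r' ≤ dist o' Z := hall Z hZP
    have h2 : (0:ℝ) ≤ dist o Z := dist_nonneg
    have h3 : (0:ℝ) < r' := hr'
    nlinarith
  -- h B ≥ 0
  have hBnn : 0 ≤ h B := by
    rw [hkey, hoB]
    have h1 : r' ≤ dist o' B := hall B hBP
    have h3 : (0:ℝ) < r' := hr'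
    nlinarith
  obtain ⟨⟨p₁, hp₁, p₂, hp₂, hray⟩, hZns, hBns⟩ := hside
  -- map the same-ray condition through the linear functional x ↦ 2⟪x, v⟫
  have hrayL : SameRay ℝ (2 * ⟪Z -ᵥ p₁, v⟫) (2 * ⟪p₂ -ᵥ B, v⟫) := by
    have := hray.map (Lmap v)
    rwa [Lmap_apply, Lmap_apply] at this
  have e1 : 2 * ⟪Z -ᵥ p₁, v⟫ = h Z := by
    rw [vsub_eq_sub, hdiff, hline p₁ hp₁, sub_zero]
  have e2 : 2 * ⟪p₂ -ᵥ B, v⟫ = - h B := by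
    rw [vsub_eq_sub, hdiff, hline p₂ hp₂, zero_sub]
  rw [e1, e2] at hrayL
  have hprod : 0 ≤ h Z * (- h B) := sameRay_real_mul_nonneg hrayL
  have hB0 : h B = 0 := by nlinarith
  -- show B lies on the line, contradicting strict opposite sides
  by_cases hv0 : v = 0
  · -- then h is constant, and h C = 0 forces h ≡ 0, contradicting h Z > 0
    have : h Z = h C := by simp [hh, hv0]
    rw [hC0] at this; linarith
  · have hACne : A - C ≠ 0 := sub_ne_zero.mpr (Ne.symm hCAne)
    have hACorth : A - C ∈ (ℝ ∙ v)ᗮ := by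
      rw [Submodule.mem_orthogonal_singleton_iff_inner_left]
      have := hdiff A C; rw [hA0, hC0] at this; linarith
    have hBCorth : B - C ∈ (ℝ ∙ v)ᗮ := by
      rw [Submodule.mem_orthogonal_singleton_iff_inner_left]
      have := hdiff B C; rw [hB0, hC0] at this; linarith
    have hdim : Module.finrank ℝ ((ℝ ∙ v)ᗮ) = 1 := by
      have h1 := Submodule.finrank_add_finrank_orthogonal
        (K := ((ℝ ∙ v) : Submodule ℝ (EuclideanSpace ℝ (Fin 2))))
      rw [finrank_span_singleton hv0, finrank_euclideanSpace_fin] at h1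
      omega
    have hspan_le : (ℝ ∙ (A - C)) ≤ (ℝ ∙ v)ᗮ := by
      rwa [Submodule.span_singleton_le_iff_mem]
    have hspan_eq : (ℝ ∙ (A - C)) = (ℝ ∙ v)ᗮ :=
      Submodule.eq_of_le_of_finrank_eq hspan_le
        (by rw [finrank_span_singleton hACne, hdim])
    have : B - C ∈ (ℝ ∙ (A - C)) := hspan_eq ▸ hBCorth
    obtain ⟨t, ht⟩ := Submodule.mem_span_singleton.mp this
    have hBmem : B ∈ line[ℝ, C, A] := by
      have : (B - C) +ᵥ C ∈ line[ℝ, C, A] :=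
        vadd_left_mem_affineSpan_pair.mpr ⟨t, by rw [vsub_eq_sub, ht]⟩
      simpa [vadd_eq_add, sub_add_cancel] using this
    exact hBns hBmem

theorem stmt10 (P : Finset (EuclideanSpace ℝ (Fin 2))) (hgp : GeneralPosition P)
    (C A B o : EuclideanSpace ℝ (Fin 2)) (r : ℝ)
    (hCA : DelaunayEdge P C A) (hCB : DelaunayEdge P C B)
    (hoA : dist o A = r) (hoB : dist o B = r) (hoC : dist o C = r) :
    (∀ Z ∈ P, ¬ (dist o Z < r ∧
      (affineSpan ℝ ({C, A} : Set (EuclideanSpace ℝ (Fin 2)))).SOppSide Z B)) ∧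
    (∀ Z ∈ P, ¬ (dist o Z < r ∧
      (affineSpan ℝ ({C, B} : Set (EuclideanSpace ℝ (Fin 2)))).SOppSide Z A)) := by
  exact ⟨aux_side P C A B o r hCA hCB.2.1 hoA hoB hoC,
         aux_side P C B A o r hCB hCA.2.1 hoB hoA hoC⟩
end
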